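/- Fix k > 0, P₂ ∈ ℝ and measurable Γ₂ : [0,∞) → ℝ with ∫|Γ₂(y)|(1+y²)dν(y) < ∞, and define G₁^{*,k}(P,Γ) := inf_{0≤u≤k} G₁(u,P,Γ,P₂,Γ₂). Then for all P, P′ ∈ ℝ and all measurable Γ, Γ′ : [0,∞) → ℝ with ∫|·(y)|(1+y²)dν(y) < ∞: |G₁^{*,k}(P,Γ) − G₁^{*,k}(P′,Γ′)| ≤ (λ + 2k(b+λb_Y))·|P − P′| + ∫|Γ(y) − Γ′(y)| λ dν(y). -/
import Mathlib

open MeasureTheory Real Set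

/-- `G₁(u,P₁,Γ₁,P₂,Γ₂) := ∫ [(P₁+Γ₁(y))·(((1−uy)⁺)² − 1) + (P₂+Γ₂(y))·((1−uy)⁻)²] λ dν(y)
  + 2uP₁(b+λb_Y)`. -/
noncomputable def G1 (ν : Measure ℝ) (lam b P₁ P₂ : ℝ) (Γ₁ Γ₂ : ℝ → ℝ) (u : ℝ) : ℝ :=
  lam * ∫ y, ((P₁ + Γ₁ y) * ((max (1 - u * y) 0) ^ 2 - 1)
      + (P₂ + Γ₂ y) * (max (-(1 - u * y)) 0) ^ 2) ∂ν
    + 2 * u * P₁ * (b + lam * ∫ y, y ∂ν)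

lemma absGam_int {ν : Measure ℝ} [IsProbabilityMeasure ν] {Γ₁ : ℝ → ℝ}
    (hΓ₁m : Measurable Γ₁) (hΓ₁ : Integrable (fun y => |Γ₁ y| * (1 + y ^ 2)) ν) :
    Integrable (fun y => |Γ₁ y|) ν := by
  refine hΓ₁.mono' (hΓ₁m.abs.aestronglyMeasurable) ?_
  filter_upwards with y
  have : (0:ℝ) ≤ |Γ₁ y| := abs_nonneg _
  rw [norm_eq_abs, abs_abs]
  nlinarith [sq_nonneg y]

lemma aux_int1 {ν : Measure ℝ} [IsProbabilityMeasure ν] (hν0 : ∀ᵐ y ∂ν, 0 ≤ y)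
    {u : ℝ} (hu : 0 ≤ u) (P₁ : ℝ) {Γ₁ : ℝ → ℝ}
    (hΓ₁m : Measurable Γ₁) (hΓ₁ : Integrable (fun y => |Γ₁ y| * (1 + y ^ 2)) ν) :
    Integrable (fun y => (P₁ + Γ₁ y) * ((max (1 - u * y) 0) ^ 2 - 1)) ν := by
  have hint : Integrable (fun y => |P₁| + |Γ₁ y|) ν :=
    (integrable_const _).add (absGam_int hΓ₁m hΓ₁)
  refine hint.mono' ?_ ?_
  · apply Measurable.aestronglyMeasurable
    fun_prop
  · filter_upwards [hν0] with y hy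
    have h1 : max (1 - u * y) 0 ≤ 1 := by
      apply max_le _ zero_le_one
      nlinarith
    have h0 : 0 ≤ max (1 - u * y) 0 := le_max_right _ _
    rw [norm_eq_abs, abs_mul]
    have h2 : |(max (1 - u * y) 0) ^ 2 - 1| ≤ 1 := by
      rw [abs_le]; constructor <;> nlinarith
    calc |P₁ + Γ₁ y| * |(max (1 - u * y) 0) ^ 2 - 1|
        ≤ (|P₁| + |Γ₁ y|) * 1 := by
          apply mul_le_mul (abs_add_le _ _) h2 (abs_nonneg _)
          positivity
      _ = |P₁| + |Γ₁ y| := mul_one _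

lemma aux_int2 {ν : Measure ℝ} [IsProbabilityMeasure ν] (hν0 : ∀ᵐ y ∂ν, 0 ≤ y)
    (hy2 : Integrable (fun y => y ^ 2) ν)
    {k u : ℝ} (hu : u ∈ Icc 0 k) (P₂ : ℝ) {Γ₂ : ℝ → ℝ}
    (hΓ₂m : Measurable Γ₂) (hΓ₂ : Integrable (fun y => |Γ₂ y| * (1 + y ^ 2)) ν) :
    Integrable (fun y => (P₂ + Γ₂ y) * (max (-(1 - u * y)) 0) ^ 2) ν := by
  have hint : Integrable (fun y => (|P₂| * k ^ 2) * y ^ 2 + k ^ 2 * (|Γ₂ y| * (1 + y ^ 2))) ν :=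
    (hy2.const_mul _).add (hΓ₂.const_mul _)
  refine hint.mono' ?_ ?_
  · apply Measurable.aestronglyMeasurable
    fun_prop
  · filter_upwards [hν0] with y hy
    obtain ⟨hu0, huk⟩ := hu
    have h0 : 0 ≤ max (-(1 - u * y)) 0 := le_max_right _ _
    have h1 : max (-(1 - u * y)) 0 ≤ k * y := by
      apply max_le _ (mul_nonneg (hu0.trans huk) hy)
      nlinarith
    rw [norm_eq_abs, abs_mul]
    have h2 : |(max (-(1 - u * y)) 0) ^ 2| ≤ k ^ 2 * y ^ 2 := by
      rw [abs_of_nonneg (by positivity)]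
      nlinarith
    have h3 : |P₂ + Γ₂ y| ≤ |P₂| + |Γ₂ y| := abs_add_le _ _
    nlinarith [abs_nonneg (P₂ + Γ₂ y), abs_nonneg ((max (-(1 - u * y)) 0) ^ 2),
      abs_nonneg (Γ₂ y), sq_nonneg y, sq_nonneg k,
      mul_le_mul h3 h2 (abs_nonneg _) (by positivity : (0:ℝ) ≤ |P₂| + |Γ₂ y|)]

lemma aux_abs1 {ν : Measure ℝ} [IsProbabilityMeasure ν] (hν0 : ∀ᵐ y ∂ν, 0 ≤ y)
    {u : ℝ} (hu : 0 ≤ u) (P₁ : ℝ) {Γ₁ : ℝ → ℝ}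
    (hΓ₁m : Measurable Γ₁) (hΓ₁ : Integrable (fun y => |Γ₁ y| * (1 + y ^ 2)) ν) :
    |∫ y, (P₁ + Γ₁ y) * ((max (1 - u * y) 0) ^ 2 - 1) ∂ν| ≤ |P₁| + ∫ y, |Γ₁ y| ∂ν := by
  have hI := aux_int1 hν0 hu P₁ hΓ₁m hΓ₁
  have h1 := norm_integral_le_integral_norm (μ := ν)
    (f := fun y => (P₁ + Γ₁ y) * ((max (1 - u * y) 0) ^ 2 - 1))
  rw [norm_eq_abs] at h1
  refine h1.trans ?_
  have h2 : ∫ y, ‖(P₁ + Γ₁ y) * ((max (1 - u * y) 0) ^ 2 - 1)‖ ∂ν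
      ≤ ∫ y, (|P₁| + |Γ₁ y|) ∂ν := by
    refine integral_mono_ae hI.norm ((integrable_const _).add (absGam_int hΓ₁m hΓ₁)) ?_
    filter_upwards [hν0] with y hy
    have h1' : max (1 - u * y) 0 ≤ 1 := by
      apply max_le _ zero_le_one; nlinarith
    have h0 : 0 ≤ max (1 - u * y) 0 := le_max_right _ _
    rw [norm_eq_abs, abs_mul]
    have h2' : |(max (1 - u * y) 0) ^ 2 - 1| ≤ 1 := by
      rw [abs_le]; constructor <;> nlinarith
    calc |P₁ + Γ₁ y| * |(max (1 - u * y) 0) ^ 2 - 1|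
        ≤ (|P₁| + |Γ₁ y|) * 1 := by
          apply mul_le_mul (abs_add_le _ _) h2' (abs_nonneg _); positivity
      _ = |P₁| + |Γ₁ y| := mul_one _
  refine h2.trans ?_
  rw [integral_add (integrable_const _) (absGam_int hΓ₁m hΓ₁)]
  simp

lemma aux_abs2 {ν : Measure ℝ} [IsProbabilityMeasure ν] (hν0 : ∀ᵐ y ∂ν, 0 ≤ y)
    (hy2 : Integrable (fun y => y ^ 2) ν)
    {k u : ℝ} (hu : u ∈ Icc 0 k) (P₂ : ℝ) {Γ₂ : ℝ → ℝ}
    (hΓ₂m : Measurable Γ₂) (hΓ₂ : Integrable (fun y => |Γ₂ y| * (1 + y ^ 2)) ν) :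
    |∫ y, (P₂ + Γ₂ y) * (max (-(1 - u * y)) 0) ^ 2 ∂ν|
      ≤ ∫ y, ((|P₂| * k ^ 2) * y ^ 2 + k ^ 2 * (|Γ₂ y| * (1 + y ^ 2))) ∂ν := by
  have hI := aux_int2 hν0 hy2 hu P₂ hΓ₂m hΓ₂
  have h1 := norm_integral_le_integral_norm (μ := ν)
    (f := fun y => (P₂ + Γ₂ y) * (max (-(1 - u * y)) 0) ^ 2)
  rw [norm_eq_abs] at h1
  refine h1.trans ?_
  refine integral_mono_ae hI.norm ((hy2.const_mul _).add (hΓ₂.const_mul _)) ?_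
  filter_upwards [hν0] with y hy
  obtain ⟨hu0, huk⟩ := hu
  have h0 : 0 ≤ max (-(1 - u * y)) 0 := le_max_right _ _
  have h1' : max (-(1 - u * y)) 0 ≤ k * y := by
    apply max_le _ (mul_nonneg (hu0.trans huk) hy)
    nlinarith
  rw [norm_eq_abs, abs_mul]
  have h2 : |(max (-(1 - u * y)) 0) ^ 2| ≤ k ^ 2 * y ^ 2 := by
    rw [abs_of_nonneg (by positivity)]
    nlinarith
  have h3 : |P₂ + Γ₂ y| ≤ |P₂| + |Γ₂ y| := abs_add_le _ _
  nlinarith [abs_nonneg (P₂ + Γ₂ y), abs_nonneg ((max (-(1 - u * y)) 0) ^ 2),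
    abs_nonneg (Γ₂ y), sq_nonneg y, sq_nonneg k,
    mul_le_mul h3 h2 (abs_nonneg _) (by positivity : (0:ℝ) ≤ |P₂| + |Γ₂ y|)]

lemma G1_abs_le {ν : Measure ℝ} [IsProbabilityMeasure ν] (hν0 : ∀ᵐ y ∂ν, 0 ≤ y)
    {lam b : ℝ} (hlam : 0 < lam)
    (hy2 : Integrable (fun y => y ^ 2) ν)
    {k : ℝ} (P₁ P₂ : ℝ) {Γ₁ Γ₂ : ℝ → ℝ}
    (hΓ₁m : Measurable Γ₁) (hΓ₂m : Measurable Γ₂)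
    (hΓ₁ : Integrable (fun y => |Γ₁ y| * (1 + y ^ 2)) ν)
    (hΓ₂ : Integrable (fun y => |Γ₂ y| * (1 + y ^ 2)) ν)
    (hcb : 0 ≤ b + lam * ∫ y, y ∂ν)
    {u : ℝ} (hu : u ∈ Icc 0 k) :
    |G1 ν lam b P₁ P₂ Γ₁ Γ₂ u|
      ≤ lam * ((|P₁| + ∫ y, |Γ₁ y| ∂ν)
          + ∫ y, ((|P₂| * k ^ 2) * y ^ 2 + k ^ 2 * (|Γ₂ y| * (1 + y ^ 2))) ∂ν)
        + 2 * k * |P₁| * (b + lam * ∫ y, y ∂ν) := by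
  have hI1 := aux_int1 hν0 hu.1 P₁ hΓ₁m hΓ₁
  have hI2 := aux_int2 hν0 hy2 hu P₂ hΓ₂m hΓ₂
  have hA := aux_abs1 hν0 hu.1 P₁ hΓ₁m hΓ₁
  have hB := aux_abs2 hν0 hy2 hu P₂ hΓ₂m hΓ₂
  unfold G1
  rw [integral_add hI1 hI2]
  have hC : |2 * u * P₁ * (b + lam * ∫ y, y ∂ν)|
      ≤ 2 * k * |P₁| * (b + lam * ∫ y, y ∂ν) := by
    rw [abs_mul, abs_mul, abs_mul, abs_of_nonneg hcb, abs_of_nonneg hu.1]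
    have : |(2:ℝ)| = 2 := by norm_num
    rw [this]
    have huk := hu.2
    nlinarith [abs_nonneg P₁, mul_nonneg (abs_nonneg P₁) hcb]
  calc |lam * ((∫ y, (P₁ + Γ₁ y) * ((max (1 - u * y) 0) ^ 2 - 1) ∂ν)
            + ∫ y, (P₂ + Γ₂ y) * (max (-(1 - u * y)) 0) ^ 2 ∂ν)
          + 2 * u * P₁ * (b + lam * ∫ y, y ∂ν)|
      ≤ |lam| * (|∫ y, (P₁ + Γ₁ y) * ((max (1 - u * y) 0) ^ 2 - 1) ∂ν|
            + |∫ y, (P₂ + Γ₂ y) * (max (-(1 - u * y)) 0) ^ 2 ∂ν|)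
          + |2 * u * P₁ * (b + lam * ∫ y, y ∂ν)| := by
        refine (abs_add_le _ _).trans ?_
        rw [abs_mul]
        have habs : |(∫ y, (P₁ + Γ₁ y) * ((max (1 - u * y) 0) ^ 2 - 1) ∂ν)
            + ∫ y, (P₂ + Γ₂ y) * (max (-(1 - u * y)) 0) ^ 2 ∂ν|
            ≤ |∫ y, (P₁ + Γ₁ y) * ((max (1 - u * y) 0) ^ 2 - 1) ∂ν|
              + |∫ y, (P₂ + Γ₂ y) * (max (-(1 - u * y)) 0) ^ 2 ∂ν| := abs_add_le _ _
        have hl : 0 ≤ |lam| := abs_nonneg _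
        nlinarith [abs_nonneg ((∫ y, (P₁ + Γ₁ y) * ((max (1 - u * y) 0) ^ 2 - 1) ∂ν)
            + ∫ y, (P₂ + Γ₂ y) * (max (-(1 - u * y)) 0) ^ 2 ∂ν)]
    _ ≤ lam * ((|P₁| + ∫ y, |Γ₁ y| ∂ν)
            + ∫ y, ((|P₂| * k ^ 2) * y ^ 2 + k ^ 2 * (|Γ₂ y| * (1 + y ^ 2))) ∂ν)
          + 2 * k * |P₁| * (b + lam * ∫ y, y ∂ν) := by
        rw [abs_of_pos hlam]
        gcongr

lemma G1_sub {ν : Measure ℝ} [IsProbabilityMeasure ν] (hν0 : ∀ᵐ y ∂ν, 0 ≤ y)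
    (lam b : ℝ)
    (hy2 : Integrable (fun y => y ^ 2) ν)
    {k : ℝ} (P P' P₂ : ℝ) {Γ Γ' Γ₂ : ℝ → ℝ}
    (hΓm : Measurable Γ) (hΓ'm : Measurable Γ') (hΓ₂m : Measurable Γ₂)
    (hΓ : Integrable (fun y => |Γ y| * (1 + y ^ 2)) ν)
    (hΓ' : Integrable (fun y => |Γ' y| * (1 + y ^ 2)) ν)
    (hΓ₂ : Integrable (fun y => |Γ₂ y| * (1 + y ^ 2)) ν)
    {u : ℝ} (hu : u ∈ Icc 0 k) :
    G1 ν lam b P P₂ Γ Γ₂ u - G1 ν lam b P' P₂ Γ' Γ₂ u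
      = lam * ∫ y, ((P - P') + (Γ y - Γ' y)) * ((max (1 - u * y) 0) ^ 2 - 1) ∂ν
        + 2 * u * (P - P') * (b + lam * ∫ y, y ∂ν) := by
  have hI : Integrable (fun y => (P + Γ y) * ((max (1 - u * y) 0) ^ 2 - 1)
      + (P₂ + Γ₂ y) * (max (-(1 - u * y)) 0) ^ 2) ν :=
    (aux_int1 hν0 hu.1 P hΓm hΓ).add (aux_int2 hν0 hy2 hu P₂ hΓ₂m hΓ₂)
  have hI' : Integrable (fun y => (P' + Γ' y) * ((max (1 - u * y) 0) ^ 2 - 1)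
      + (P₂ + Γ₂ y) * (max (-(1 - u * y)) 0) ^ 2) ν :=
    (aux_int1 hν0 hu.1 P' hΓ'm hΓ').add (aux_int2 hν0 hy2 hu P₂ hΓ₂m hΓ₂)
  unfold G1
  rw [show ∀ a a' c c' : ℝ, lam * a + c - (lam * a' + c') = lam * (a - a') + (c - c')
    from fun _ _ _ _ => by ring]
  rw [← integral_sub hI hI']
  congr 1
  · congr 1
    apply integral_congr_ae
    filter_upwards with y
    ring
  · ring

/-- with `G₁^{*,k}(P,Γ) := inf_{0≤u≤k} G₁(u,P,Γ,P₂,Γ₂)`,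
`|G₁^{*,k}(P,Γ) − G₁^{*,k}(P′,Γ′)| ≤ (λ + 2k(b+λb_Y))|P−P′| + ∫|Γ−Γ′| λ dν`. -/
theorem stmt18 (ν : Measure ℝ) [IsProbabilityMeasure ν]
    (hν0 : ∀ᵐ y ∂ν, 0 ≤ y)
    (lam b : ℝ) (hlam : 0 < lam) (hb : 0 < b)
    (hy : Integrable (fun y => y) ν)
    (hy2 : Integrable (fun y => y ^ 2) ν)
    (hbY : 0 < ∫ y, y ∂ν)
    (k : ℝ) (hk : 0 < k)
    (P₂ : ℝ) (Γ₂ : ℝ → ℝ) (hΓ₂m : Measurable Γ₂)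
    (hΓ₂ : Integrable (fun y => |Γ₂ y| * (1 + y ^ 2)) ν)
    (P P' : ℝ) (Γ Γ' : ℝ → ℝ)
    (hΓm : Measurable Γ) (hΓ'm : Measurable Γ')
    (hΓ : Integrable (fun y => |Γ y| * (1 + y ^ 2)) ν)
    (hΓ' : Integrable (fun y => |Γ' y| * (1 + y ^ 2)) ν) :
    |sInf ((fun u => G1 ν lam b P P₂ Γ Γ₂ u) '' Set.Icc 0 k)
        - sInf ((fun u => G1 ν lam b P' P₂ Γ' Γ₂ u) '' Set.Icc 0 k)|
      ≤ (lam + 2 * k * (b + lam * ∫ y, y ∂ν)) * |P - P'|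
        + lam * ∫ y, |Γ y - Γ' y| ∂ν := by
  have hcb : (0:ℝ) ≤ b + lam * ∫ y, y ∂ν := by nlinarith
  set C := (lam + 2 * k * (b + lam * ∫ y, y ∂ν)) * |P - P'|
      + lam * ∫ y, |Γ y - Γ' y| ∂ν with hC
  -- Integrability of the difference Γ - Γ'
  have hΔΓm : Measurable (fun y => Γ y - Γ' y) := hΓm.sub hΓ'm
  have hΔΓ : Integrable (fun y => |Γ y - Γ' y| * (1 + y ^ 2)) ν := by
    refine (hΓ.add hΓ').mono' ?_ ?_
    · apply Measurable.aestronglyMeasurable; fun_prop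
    · filter_upwards with y
      have h1 : |Γ y - Γ' y| ≤ |Γ y| + |Γ' y| := abs_sub _ _
      have h2 : (0:ℝ) ≤ 1 + y ^ 2 := by positivity
      simp only [Pi.add_apply]
      rw [norm_eq_abs, abs_mul, abs_abs, abs_of_nonneg h2]
      nlinarith [abs_nonneg (Γ y - Γ' y)]
  -- pointwise bound on the difference
  have hdiff : ∀ u ∈ Icc 0 k,
      |G1 ν lam b P P₂ Γ Γ₂ u - G1 ν lam b P' P₂ Γ' Γ₂ u| ≤ C := by
    intro u hu
    rw [G1_sub hν0 lam b hy2 P P' P₂ hΓm hΓ'm hΓ₂m hΓ hΓ' hΓ₂ hu]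
    have hA := aux_abs1 hν0 hu.1 (P - P') hΔΓm hΔΓ
    have hCt : |2 * u * (P - P') * (b + lam * ∫ y, y ∂ν)|
        ≤ 2 * k * |P - P'| * (b + lam * ∫ y, y ∂ν) := by
      rw [abs_mul, abs_mul, abs_mul, abs_of_nonneg hcb, abs_of_nonneg hu.1]
      have h2 : |(2:ℝ)| = 2 := by norm_num
      rw [h2]
      have huk := hu.2
      nlinarith [abs_nonneg (P - P'), mul_nonneg (abs_nonneg (P - P')) hcb]
    calc |lam * ∫ y, ((P - P') + (Γ y - Γ' y)) * ((max (1 - u * y) 0) ^ 2 - 1) ∂ν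
            + 2 * u * (P - P') * (b + lam * ∫ y, y ∂ν)|
        ≤ |lam| * |∫ y, ((P - P') + (Γ y - Γ' y)) * ((max (1 - u * y) 0) ^ 2 - 1) ∂ν|
            + |2 * u * (P - P') * (b + lam * ∫ y, y ∂ν)| := by
          refine (abs_add_le _ _).trans ?_
          rw [abs_mul]
      _ ≤ lam * (|P - P'| + ∫ y, |Γ y - Γ' y| ∂ν)
            + 2 * k * |P - P'| * (b + lam * ∫ y, y ∂ν) := by
          rw [abs_of_pos hlam]
          gcongr
      _ = C := by rw [hC]; ring
  -- boundedness and nonemptiness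
  have h0mem : (0:ℝ) ∈ Icc (0:ℝ) k := ⟨le_refl 0, hk.le⟩
  have hbdd : ∀ (P₁ : ℝ) (Γ₁ : ℝ → ℝ), Measurable Γ₁ →
      Integrable (fun y => |Γ₁ y| * (1 + y ^ 2)) ν →
      BddBelow ((fun u => G1 ν lam b P₁ P₂ Γ₁ Γ₂ u) '' Icc 0 k) := by
    intro P₁ Γ₁ hΓ₁m hΓ₁
    refine ⟨-(lam * ((|P₁| + ∫ y, |Γ₁ y| ∂ν)
          + ∫ y, ((|P₂| * k ^ 2) * y ^ 2 + k ^ 2 * (|Γ₂ y| * (1 + y ^ 2))) ∂ν)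
        + 2 * k * |P₁| * (b + lam * ∫ y, y ∂ν)), ?_⟩
    rintro x ⟨u, hu, rfl⟩
    have := G1_abs_le hν0 hlam hy2 P₁ P₂ hΓ₁m hΓ₂m hΓ₁ hΓ₂ hcb hu
    have := neg_abs_le (G1 ν lam b P₁ P₂ Γ₁ Γ₂ u)
    linarith
  have hbddA := hbdd P Γ hΓm hΓ
  have hbddB := hbdd P' Γ' hΓ'm hΓ'
  have hneA : ((fun u => G1 ν lam b P P₂ Γ Γ₂ u) '' Icc 0 k).Nonempty :=
    ⟨_, mem_image_of_mem _ h0mem⟩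
  have hneB : ((fun u => G1 ν lam b P' P₂ Γ' Γ₂ u) '' Icc 0 k).Nonempty :=
    ⟨_, mem_image_of_mem _ h0mem⟩
  rw [abs_le]
  constructor
  · have hkey : sInf ((fun u => G1 ν lam b P' P₂ Γ' Γ₂ u) '' Icc 0 k) - C
        ≤ sInf ((fun u => G1 ν lam b P P₂ Γ Γ₂ u) '' Icc 0 k) := by
      refine le_csInf hneA ?_
      rintro x ⟨u, hu, rfl⟩
      have h1 : sInf ((fun u => G1 ν lam b P' P₂ Γ' Γ₂ u) '' Icc 0 k)
          ≤ G1 ν lam b P' P₂ Γ' Γ₂ u := csInf_le hbddB (mem_image_of_mem _ hu)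
      have h2 := hdiff u hu
      rw [abs_le] at h2
      simp only
      linarith [h2.1]
    linarith
  · have hkey : sInf ((fun u => G1 ν lam b P P₂ Γ Γ₂ u) '' Icc 0 k) - C
        ≤ sInf ((fun u => G1 ν lam b P' P₂ Γ' Γ₂ u) '' Icc 0 k) := by
      refine le_csInf hneB ?_
      rintro x ⟨u, hu, rfl⟩
      have h1 : sInf ((fun u => G1 ν lam b P P₂ Γ Γ₂ u) '' Icc 0 k)
          ≤ G1 ν lam b P P₂ Γ Γ₂ u := csInf_le hbddA (mem_image_of_mem _ hu)
      have h2 := hdiff u hu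
      rw [abs_le] at h2
      simp only
      linarith [h2.2]
    linarith
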